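/- arXiv:2503.15480 — 2 statements merged into one kernel-verified Lean document; each statement's English description precedes it below -/
import Mathlib

section
/- Define Ω_b(ξ₁,ξ₂) = 1/(ξ₁+ξ₂) - 1/ξ₁ - 1/ξ₂ for nonzero real ξ₁, ξ₂ with ξ₁+ξ₂ ≠ 0. If min{|ξ₁|,|ξ₂|} ≥ 1, then |Ω_b(ξ₁,ξ₂)| ≤ C·|ξ|_max·|ξ|_min⁻², where |ξ|_max = max{|ξ₁|,|ξ₂|,|ξ₁+ξ₂|}, |ξ|_min = min{|ξ₁|,|ξ₂|,|ξ₁+ξ₂|}, and C is an absolute constant. -/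
noncomputable section

/-- The "bad" (singular) part of the resonance function. -/
def OmegaB (ξ₁ ξ₂ : ℝ) : ℝ := 1 / (ξ₁ + ξ₂) - 1 / ξ₁ - 1 / ξ₂

lemma abs_one_div_le_one_div {m x : ℝ} (hm : 0 < m) (hx : m ≤ |x|) : |1 / x| ≤ 1 / m := by
  rw [abs_div, abs_one]
  exact one_div_le_one_div_of_le hm hx

lemma abs_omegaB_le {m ξ₁ ξ₂ : ℝ} (hm : 0 < m) (h₁ : m ≤ |ξ₁|) (h₂ : m ≤ |ξ₂|)
    (h₃ : m ≤ |ξ₁ + ξ₂|) : |OmegaB ξ₁ ξ₂| ≤ 3 / m :=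
  calc |OmegaB ξ₁ ξ₂| ≤ |1 / (ξ₁ + ξ₂)| + |1 / ξ₁| + |1 / ξ₂| :=
        (abs_sub _ _).trans (add_le_add_left (abs_sub _ _) _)
    _ ≤ 1 / m + 1 / m + 1 / m := by
        gcongr <;> exact abs_one_div_le_one_div hm ‹_›
    _ = 3 / m := by ring

lemma div_le_mul_mul_zpow_neg_two {c m M : ℝ} (hc : 0 ≤ c) (hm : 0 < m) (hmM : m ≤ M) :
    c / m ≤ c * M * m ^ (-2 : ℤ) :=
  calc c / m = c * m * m ^ (-2 : ℤ) := by
        rw [zpow_neg, zpow_two]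
        field_simp
    _ ≤ c * M * m ^ (-2 : ℤ) := by gcongr

theorem omegaB_bound :
    ∃ C : ℝ, 0 < C ∧ ∀ ξ₁ ξ₂ : ℝ, ξ₁ ≠ 0 → ξ₂ ≠ 0 → ξ₁ + ξ₂ ≠ 0 →
      1 ≤ min |ξ₁| |ξ₂| →
      |OmegaB ξ₁ ξ₂| ≤
        C * (max (max |ξ₁| |ξ₂|) |ξ₁ + ξ₂|) * (min (min |ξ₁| |ξ₂|) |ξ₁ + ξ₂|) ^ (-2 : ℤ) := by
  refine ⟨3, three_pos, fun ξ₁ ξ₂ h₁ h₂ h₃ _ => ?_⟩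
  set m := min (min |ξ₁| |ξ₂|) |ξ₁ + ξ₂|
  have hm : 0 < m := lt_min (lt_min (abs_pos.2 h₁) (abs_pos.2 h₂)) (abs_pos.2 h₃)
  have hΩ : |OmegaB ξ₁ ξ₂| ≤ 3 / m :=
    abs_omegaB_le hm ((min_le_left _ _).trans (min_le_left _ _))
      ((min_le_left _ _).trans (min_le_right _ _)) (min_le_right _ _)
  exact hΩ.trans (div_le_mul_mul_zpow_neg_two zero_le_three hm
    ((min_le_right _ _).trans (le_max_right _ _)))
end
end

section
/- Let φ(ξ) = ξ|ξ| - γ/ξ with γ > 0 and define the resonance function Ω(ξ₁,ξ₂) = φ(ξ₁+ξ₂) - φ(ξ₁) - φ(ξ₂). If min{|ξ₁|,|ξ₂|} ≥ M for a sufficiently large absolute constant M, then |Ω(ξ₁,ξ₂)| ≤ C(γ)·(|ξ|_max²|ξ|_min + |ξ|_max|ξ|_min⁻²), where |ξ|_max and |ξ|_min are the max and min of |ξ₁|, |ξ₂|, |ξ₁+ξ₂|. -/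
/-!
Split `Ω = D(ξ₁, ξ₂) + γ (ξ₁⁻¹ + ξ₂⁻¹ - (ξ₁ + ξ₂)⁻¹)` with `D(x, y) = f(x + y) - f x - f y` for
`f ξ = ξ |ξ|`. A sign-case check gives `|D(x, y)| ≤ 2 |x| |y|`; since `D(x + y, -y) = -D(x, y)`
the same holds for every pair among `x, y, x + y`, so `|D| ≤ 2 |ξ|_min |ξ|_max`, which is at most
`2 |ξ|_max² |ξ|_min` once `|ξ|_max ≥ 1` (so `M = 1` works). Each reciprocal is at most
`|ξ|_min⁻¹ ≤ |ξ|_max |ξ|_min⁻²`.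
-/

noncomputable section

/-- The symbol of the rotation-modified Benjamin–Ono equation. -/
def phiRMBO (γ ξ : ℝ) : ℝ := ξ * |ξ| - γ / ξ

/-- The resonance function associated with `phiRMBO`. -/
def OmegaRMBO (γ ξ₁ ξ₂ : ℝ) : ℝ :=
  phiRMBO γ (ξ₁ + ξ₂) - phiRMBO γ ξ₁ - phiRMBO γ ξ₂

def signedSqDefect (x y : ℝ) : ℝ := (x + y) * |x + y| - x * |x| - y * |y|

lemma signedSqDefect_add_neg (x y : ℝ) : signedSqDefect (x + y) (-y) = -signedSqDefect x y := by
  simp only [signedSqDefect, add_neg_cancel_right, abs_neg]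
  ring

lemma signedSqDefect_comm (x y : ℝ) : signedSqDefect y x = signedSqDefect x y := by
  simp only [signedSqDefect, add_comm y x]
  ring

lemma abs_signedSqDefect_le_mul (x y : ℝ) : |signedSqDefect x y| ≤ 2 * |x| * |y| := by
  unfold signedSqDefect
  rcases le_total 0 x with hx | hx <;> rcases le_total 0 y with hy | hy <;>
    rcases le_total 0 (x + y) with hs | hs <;>
    simp only [abs_of_nonneg, abs_of_nonpos, hx, hy, hs, abs_le] <;>
    constructor <;> nlinarith

lemma min_pairwise_mul_le_min_mul_max (a b c : ℝ) :
    min (min (a * b) (a * c)) (b * c) ≤ min (min a b) c * max (max a b) c := by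
  simp only [min_def, max_def]
  split_ifs <;> nlinarith

lemma abs_signedSqDefect_le_min_mul_max (x y : ℝ) :
    |signedSqDefect x y| ≤
      2 * (min (min |x| |y|) |x + y| * max (max |x| |y|) |x + y|) := by
  have hxy := abs_signedSqDefect_le_mul x y
  have hsy := abs_signedSqDefect_le_mul (x + y) (-y)
  have hsx := abs_signedSqDefect_le_mul (y + x) (-x)
  rw [signedSqDefect_add_neg, abs_neg, abs_neg] at hsy
  rw [signedSqDefect_add_neg, signedSqDefect_comm, abs_neg, abs_neg, add_comm y x] at hsx
  refine le_trans ?_ (mul_le_mul_of_nonneg_left (min_pairwise_mul_le_min_mul_max _ _ _) zero_le_two)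
  simp only [mul_min_of_nonneg _ _ (zero_le_two : (0 : ℝ) ≤ 2), le_min_iff]
  refine ⟨⟨?_, ?_⟩, ?_⟩ <;> linarith

lemma abs_inv_le_inv_of_le {a m : ℝ} (hm : 0 < m) (hma : m ≤ |a|) : |a⁻¹| ≤ m⁻¹ := by
  rw [abs_inv]
  exact inv_anti₀ hm hma

lemma abs_inv_add_inv_sub_inv_add_le {x y : ℝ} (hx : x ≠ 0) (hy : y ≠ 0) (hs : x + y ≠ 0) :
    |x⁻¹ + y⁻¹ - (x + y)⁻¹| ≤ 3 / min (min |x| |y|) |x + y| := by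
  set m := min (min |x| |y|) |x + y|
  have hm : 0 < m := lt_min (lt_min (abs_pos.2 hx) (abs_pos.2 hy)) (abs_pos.2 hs)
  have hmx : m ≤ |x| := (min_le_left _ _).trans (min_le_left _ _)
  have hmy : m ≤ |y| := (min_le_left _ _).trans (min_le_right _ _)
  calc |x⁻¹ + y⁻¹ - (x + y)⁻¹| ≤ |x⁻¹| + |y⁻¹| + |(x + y)⁻¹| := by
        rw [sub_eq_add_neg, ← abs_neg (x + y)⁻¹]; exact abs_add_three _ _ _
    _ ≤ m⁻¹ + m⁻¹ + m⁻¹ := by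
        gcongr
        exacts [abs_inv_le_inv_of_le hm hmx, abs_inv_le_inv_of_le hm hmy,
          abs_inv_le_inv_of_le hm (min_le_right _ _)]
    _ = 3 / m := by ring

lemma OmegaRMBO_eq (γ ξ₁ ξ₂ : ℝ) :
    OmegaRMBO γ ξ₁ ξ₂ = signedSqDefect ξ₁ ξ₂ + γ * (ξ₁⁻¹ + ξ₂⁻¹ - (ξ₁ + ξ₂)⁻¹) := by
  simp only [OmegaRMBO, phiRMBO, signedSqDefect, div_eq_mul_inv]
  ring

lemma two_mul_add_mul_div_le {m M γ : ℝ} (hm : 0 < m) (hmM : m ≤ M) (hM : 1 ≤ M) (hγ : 0 ≤ γ) :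
    2 * (m * M) + γ * (3 / m) ≤ (2 + 3 * γ) * (M ^ 2 * m + M * m ^ (-2 : ℤ)) := by
  have hquad : m * M ≤ M ^ 2 * m := by nlinarith [mul_le_mul_of_nonneg_left hM hm.le]
  have hrec : 1 / m ≤ M * m ^ (-2 : ℤ) := by
    rw [zpow_neg, zpow_ofNat, le_mul_inv_iff₀ (by positivity), one_div_mul_eq_div,
      div_le_iff₀ hm]
    nlinarith
  have hA : 0 ≤ M ^ 2 * m := by positivity
  have hB : 0 ≤ M * m ^ (-2 : ℤ) := by positivity
  calc 2 * (m * M) + γ * (3 / m) = 2 * (m * M) + 3 * γ * (1 / m) := by ring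
    _ ≤ 2 * (M ^ 2 * m) + 3 * γ * (M * m ^ (-2 : ℤ)) := by gcongr
    _ ≤ (2 + 3 * γ) * (M ^ 2 * m + M * m ^ (-2 : ℤ)) := by nlinarith [mul_nonneg hγ hA, hB]

theorem resonance_bound_RMBO :
    ∃ M : ℝ, 0 < M ∧ ∀ γ : ℝ, 0 < γ → ∃ C : ℝ, 0 < C ∧
      ∀ ξ₁ ξ₂ : ℝ, ξ₁ ≠ 0 → ξ₂ ≠ 0 → ξ₁ + ξ₂ ≠ 0 → M ≤ min |ξ₁| |ξ₂| →
        |OmegaRMBO γ ξ₁ ξ₂| ≤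
          C * ((max (max |ξ₁| |ξ₂|) |ξ₁ + ξ₂|) ^ 2 * (min (min |ξ₁| |ξ₂|) |ξ₁ + ξ₂|)
            + (max (max |ξ₁| |ξ₂|) |ξ₁ + ξ₂|) * (min (min |ξ₁| |ξ₂|) |ξ₁ + ξ₂|) ^ (-2 : ℤ)) := by
  refine ⟨1, one_pos, fun γ hγ => ⟨2 + 3 * γ, by positivity, fun ξ₁ ξ₂ h₁ h₂ hs hM => ?_⟩⟩
  set m := min (min |ξ₁| |ξ₂|) |ξ₁ + ξ₂|
  set M := max (max |ξ₁| |ξ₂|) |ξ₁ + ξ₂|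
  have hm : 0 < m := lt_min (lt_min (abs_pos.2 h₁) (abs_pos.2 h₂)) (abs_pos.2 hs)
  have hmM : m ≤ M := (min_le_right _ _).trans (le_max_right _ _)
  have hM : 1 ≤ M := hM.trans ((min_le_left _ _).trans ((le_max_left _ _).trans (le_max_left _ _)))
  calc |OmegaRMBO γ ξ₁ ξ₂|
      ≤ |signedSqDefect ξ₁ ξ₂| + γ * |ξ₁⁻¹ + ξ₂⁻¹ - (ξ₁ + ξ₂)⁻¹| := by
        rw [OmegaRMBO_eq]
        exact (abs_add_le _ _).trans_eq (by rw [abs_mul, abs_of_pos hγ])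
    _ ≤ 2 * (m * M) + γ * (3 / m) := by
        gcongr
        exacts [abs_signedSqDefect_le_min_mul_max ξ₁ ξ₂, abs_inv_add_inv_sub_inv_add_le h₁ h₂ hs]
    _ ≤ (2 + 3 * γ) * (M ^ 2 * m + M * m ^ (-2 : ℤ)) := two_mul_add_mul_div_le hm hmM hM hγ.le
end
end
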